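/- Let G be the graph obtained from M_k(n) by deleting a single edge both of whose endpoints lie outside the independent set of k vertices of degree k (i.e., both endpoints lie in the clique K_{n-k}). If 2k+1 ≤ n ≤ k³/2 + k + 1 and k ≥ 2, then λ(G) ≥ n - k - 1. -/

import Mathlib

open SimpleGraph Finset

/-- Spectral radius (largest adjacency eigenvalue) of a graph on `Fin n`. -/
noncomputable def specRad {n : ℕ} (G : SimpleGraph (Fin n)) : ℝ :=
  haveI := Classical.decRel G.Adj
  ⨆ i, (Matrix.IsHermitian.eigenvalues
    (by
      rw [Matrix.IsHermitian, Matrix.conjTranspose_eq_transpose_of_trivial]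
      exact G.isSymm_adjMatrix : (G.adjMatrix ℝ).IsHermitian)) i

/-- `M_k(n) = K_k ∨ (K_{n-2k} + K̄_k)`: vertices `0..k-1` are the independent set,
vertices `k..2k-1` their joint neighborhood, vertices `k..n-1` a clique. -/
def Mgraph (k n : ℕ) : SimpleGraph (Fin n) where
  Adj i j := i ≠ j ∧ ((k ≤ i.val ∧ k ≤ j.val) ∨
    (i.val < k ∧ k ≤ j.val ∧ j.val < 2 * k) ∨ (j.val < k ∧ k ≤ i.val ∧ i.val < 2 * k))
  symm := ⟨by intro i j h; exact ⟨h.1.symm, by tauto⟩⟩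
  loopless := ⟨by intro i h; exact h.1 rfl⟩

instance (k n : ℕ) : DecidableRel (Mgraph k n).Adj := fun _ _ => instDecidableAnd

/-- `L_k(n) = K_1 ∨ (K_{n-k-1} + K_k)`: a `K_{k+1}` on vertices `0..k` and a
`K_{n-k}` on vertices `k..n-1`, sharing the vertex `k`. -/
def Lgraph (k n : ℕ) : SimpleGraph (Fin n) where
  Adj i j := i ≠ j ∧ ((i.val ≤ k ∧ j.val ≤ k) ∨ (k ≤ i.val ∧ k ≤ j.val))
  symm := ⟨by intro i j h; exact ⟨h.1.symm, by tauto⟩⟩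
  loopless := ⟨by intro i h; exact h.1 rfl⟩

instance (k n : ℕ) : DecidableRel (Lgraph k n).Adj := fun _ _ => instDecidableAnd

/-- `N_k(n) = K_k ∨ (K_{n-2k-1} + K̄_{k+1})`: vertices `0..k` are the independent set,
vertices `k+1..2k` their joint neighborhood, vertices `k+1..n-1` a clique. -/
def Ngraph (k n : ℕ) : SimpleGraph (Fin n) where
  Adj i j := i ≠ j ∧ ((k + 1 ≤ i.val ∧ k + 1 ≤ j.val) ∨
    (i.val < k + 1 ∧ k + 1 ≤ j.val ∧ j.val < 2 * k + 1) ∨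
    (j.val < k + 1 ∧ k + 1 ≤ i.val ∧ i.val < 2 * k + 1))
  symm := ⟨by intro i j h; exact ⟨h.1.symm, by tauto⟩⟩
  loopless := ⟨by intro i h; exact h.1 rfl⟩

instance (k n : ℕ) : DecidableRel (Ngraph k n).Adj := fun _ _ => instDecidableAnd

/-- The disjoint union `K_a + K_{n-a}` on `Fin n`: vertices `0..a-1` form one clique,
vertices `a..n-1` the other. -/
def DUgraph (a n : ℕ) : SimpleGraph (Fin n) where
  Adj i j := i ≠ j ∧ ((i.val < a ∧ j.val < a) ∨ (a ≤ i.val ∧ a ≤ j.val))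
  symm := ⟨by intro i j h; exact ⟨h.1.symm, by tauto⟩⟩
  loopless := ⟨by intro i h; exact h.1 rfl⟩

instance (a n : ℕ) : DecidableRel (DUgraph a n).Adj := fun _ _ => instDecidableAnd

/-- `G` has a Hamiltonian path. -/
def HasHamiltonianPath {V : Type*} [DecidableEq V] (G : SimpleGraph V) : Prop :=
  ∃ (u v : V) (p : G.Walk u v), p.IsHamiltonian

/-- `G` is Hamiltonian-connected. -/
def HamiltonianConnected {V : Type*} [DecidableEq V] (G : SimpleGraph V) : Prop :=
  ∀ u v : V, u ≠ v → ∃ p : G.Walk u v, p.IsHamiltonian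

/-!
Rayleigh quotient of the test vector equal to `x = 2 / k²` on the independent set and to `1`
elsewhere. On `M_k(n)` its quadratic form is `(n - k)(n - k - 1) + 2k²x = (n - k)(n - k - 1) + 4`;
deleting a clique edge costs `2`, and the squared norm is `kx² + n - k = 4 / k³ + n - k`.
The quotient is at least `n - k - 1` exactly when `2(n - k - 1) ≤ k³`.
-/

open Matrix

theorem Matrix.IsHermitian.dotProduct_mulVec_le_iSup_eigenvalues_mul {ι : Type*} [Fintype ι]
    [DecidableEq ι] {A : Matrix ι ι ℝ} (hA : A.IsHermitian) (v : ι → ℝ) :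
    v ⬝ᵥ (A *ᵥ v) ≤ (⨆ i, hA.eigenvalues i) * (v ⬝ᵥ v) := by
  set U : Matrix ι ι ℝ := (hA.eigenvectorUnitary : Matrix ι ι ℝ)
  have hUt : star U = Uᵀ := conjTranspose_eq_transpose_of_trivial U
  set w := Uᵀ *ᵥ v with hw
  have hdot (z : ι → ℝ) : v ⬝ᵥ (U *ᵥ z) = w ⬝ᵥ z := by
    rw [dotProduct_mulVec, ← mulVec_transpose]
  have hquad : v ⬝ᵥ (A *ᵥ v) = ∑ i, hA.eigenvalues i * w i ^ 2 := by
    conv_lhs => rw [hA.spectral_theorem, Unitary.conjStarAlgAut_apply, hUt,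
      ← mulVec_mulVec, ← mulVec_mulVec, hdot, ← hw]
    simp only [dotProduct, mulVec_diagonal]
    exact Finset.sum_congr rfl fun i _ => by simp; ring
  have hnorm : v ⬝ᵥ v = ∑ i, w i ^ 2 := by
    have hUU : U * Uᵀ = 1 := hUt ▸ Unitary.mul_star_self_of_mem hA.eigenvectorUnitary.2
    have hv : U *ᵥ w = v := by rw [mulVec_mulVec, hUU, one_mulVec]
    rw [← congrArg (v ⬝ᵥ ·) hv, hdot]
    simp [dotProduct, sq]
  rw [hquad, hnorm, Finset.mul_sum]
  gcongr with i
  exact le_ciSup (Set.finite_range _).bddAbove i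

theorem le_specRad_of_mul_le_dotProduct {n : ℕ} (G : SimpleGraph (Fin n)) [DecidableRel G.Adj]
    {w : Fin n → ℝ} {c : ℝ} (hw : 0 < w ⬝ᵥ w)
    (h : c * (w ⬝ᵥ w) ≤ w ⬝ᵥ (G.adjMatrix ℝ *ᵥ w)) : c ≤ specRad G := by
  unfold specRad
  have hA := G.isHermitian_adjMatrix ℝ
  convert le_of_mul_le_mul_right (h.trans (hA.dotProduct_mulVec_le_iSup_eigenvalues_mul w)) hw
    using 4 <;> congr!

theorem SimpleGraph.dotProduct_adjMatrix_mulVec {V R : Type*} [Fintype V] [NonAssocSemiring R]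
    (G : SimpleGraph V) [DecidableRel G.Adj] (w : V → R) :
    w ⬝ᵥ (G.adjMatrix R *ᵥ w) = ∑ p ∈ {p : V × V | G.Adj p.1 p.2}, w p.1 * w p.2 := by
  simp [dotProduct, neighborFinset_eq_filter, Finset.mul_sum, sum_filter, ← univ_product_univ,
    sum_product]

theorem SimpleGraph.sum_adj_deleteEdges_add {V M : Type*} [Fintype V] [AddCommMonoid M]
    {G : SimpleGraph V} {u v : V} [DecidableRel G.Adj] [DecidableRel (G.deleteEdges {s(u, v)}).Adj]
    (huv : G.Adj u v) (f : V × V → M) :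
    ∑ p ∈ {p : V × V | (G.deleteEdges {s(u, v)}).Adj p.1 p.2}, f p + (f (u, v) + f (v, u)) =
      ∑ p ∈ {p : V × V | G.Adj p.1 p.2}, f p := by
  classical
  have hsplit : univ.filter (fun p : V × V => G.Adj p.1 p.2) =
      univ.filter (fun p : V × V => (G.deleteEdges {s(u, v)}).Adj p.1 p.2) ∪
        {(u, v), (v, u)} := by
    ext ⟨i, j⟩
    simp only [mem_filter, mem_univ, true_and, deleteEdges_adj, Set.mem_singleton_iff,
      Sym2.eq_iff, mem_union, mem_insert, mem_singleton, Prod.mk.injEq]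
    constructor
    · tauto
    · rintro (⟨h, -⟩ | ⟨rfl, rfl⟩ | ⟨rfl, rfl⟩)
      exacts [h, huv, huv.symm]
  rw [hsplit, sum_union, sum_pair]
  · simp [huv.ne]
  · simp

namespace Mgraph

variable (k n : ℕ)

def indepSet : Finset (Fin n) := {i | (i : ℕ) < k}

def joinSet : Finset (Fin n) := {i | k ≤ (i : ℕ) ∧ (i : ℕ) < 2 * k}

def cliqueSet : Finset (Fin n) := {i | k ≤ (i : ℕ)}

def testVector (x : ℝ) : Fin n → ℝ := fun i => if (i : ℕ) < k then x else 1

variable {k n}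

theorem card_indepSet (h : k ≤ n) : #(indepSet k n) = k := by
  simp [indepSet, Fin.card_filter_val_lt, h]

theorem compl_indepSet : (indepSet k n)ᶜ = cliqueSet k n := by
  ext i
  simp [indepSet, cliqueSet]

theorem card_cliqueSet (h : k ≤ n) : #(cliqueSet k n) = n - k := by
  rw [← compl_indepSet, card_compl, card_indepSet h, Fintype.card_fin]

theorem joinSet_subset_cliqueSet : joinSet k n ⊆ cliqueSet k n := by
  intro i
  simp only [joinSet, cliqueSet, mem_filter, mem_univ, true_and]
  omega

theorem card_joinSet (h : 2 * k ≤ n) : #(joinSet k n) = k := by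
  have hsplit : joinSet k n = indepSet (2 * k) n \ indepSet k n := by
    ext i
    simp only [joinSet, indepSet, mem_sdiff, mem_filter, mem_univ, true_and]
    omega
  have hsub : indepSet k n ⊆ indepSet (2 * k) n := by
    intro i
    simp only [indepSet, mem_filter, mem_univ, true_and]
    omega
  rw [hsplit, card_sdiff_of_subset hsub, card_indepSet h, card_indepSet (by omega)]
  omega

theorem adj_pairs_eq :
    ({p : Fin n × Fin n | (Mgraph k n).Adj p.1 p.2} : Finset _) = (cliqueSet k n).offDiag ∪
      (indepSet k n ×ˢ joinSet k n ∪ joinSet k n ×ˢ indepSet k n) := by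
  ext ⟨i, j⟩
  simp only [Mgraph, indepSet, joinSet, cliqueSet, mem_filter, mem_univ, true_and, mem_union,
    mem_offDiag, mem_product, ne_eq, Fin.ext_iff]
  omega

theorem testVector_of_mem_indepSet {x : ℝ} {i : Fin n} (hi : i ∈ indepSet k n) :
    testVector k n x i = x := by
  simp_all [testVector, indepSet]

theorem testVector_of_mem_cliqueSet {x : ℝ} {i : Fin n} (hi : i ∈ cliqueSet k n) :
    testVector k n x i = 1 := by
  simp_all [testVector, cliqueSet]

theorem testVector_dotProduct_self (h : k ≤ n) (x : ℝ) :
    testVector k n x ⬝ᵥ testVector k n x = k * x ^ 2 + (n - k) := by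
  rw [dotProduct, ← sum_add_sum_compl (indepSet k n), compl_indepSet,
    sum_eq_card_nsmul (b := x ^ 2) fun i hi => by rw [testVector_of_mem_indepSet hi, sq],
    sum_eq_card_nsmul (b := 1) fun i hi => by rw [testVector_of_mem_cliqueSet hi, one_mul],
    card_indepSet h, card_cliqueSet h, nsmul_eq_mul, nsmul_eq_mul, Nat.cast_sub h]
  ring

theorem sum_adj_testVector (h : 2 * k ≤ n) (x : ℝ) :
    ∑ p ∈ {p : Fin n × Fin n | (Mgraph k n).Adj p.1 p.2},
      testVector k n x p.1 * testVector k n x p.2 = (n - k) * (n - k - 1) + 2 * k ^ 2 * x := by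
  have hdisj : Disjoint (indepSet k n ×ˢ joinSet k n) (joinSet k n ×ˢ indepSet k n) := by
    simp only [Finset.disjoint_left, mem_product, indepSet, joinSet, mem_filter, mem_univ,
      true_and]
    omega
  have hdisj' : Disjoint (cliqueSet k n).offDiag
      (indepSet k n ×ˢ joinSet k n ∪ joinSet k n ×ˢ indepSet k n) := by
    simp only [Finset.disjoint_left, mem_offDiag, mem_union, mem_product, indepSet, joinSet,
      cliqueSet, mem_filter, mem_univ, true_and]
    omega
  have hJ {i : Fin n} (hi : i ∈ joinSet k n) : testVector k n x i = 1 :=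
    testVector_of_mem_cliqueSet (joinSet_subset_cliqueSet hi)
  rw [adj_pairs_eq, sum_union hdisj', sum_union hdisj,
    sum_eq_card_nsmul (b := 1) fun p hp => by
      rw [testVector_of_mem_cliqueSet (mem_offDiag.1 hp).1,
        testVector_of_mem_cliqueSet (mem_offDiag.1 hp).2.1, one_mul],
    sum_eq_card_nsmul (b := x) fun p hp => by
      rw [testVector_of_mem_indepSet (mem_product.1 hp).1, hJ (mem_product.1 hp).2, mul_one],
    sum_eq_card_nsmul (b := x) fun p hp => by
      rw [hJ (mem_product.1 hp).1, testVector_of_mem_indepSet (mem_product.1 hp).2, one_mul],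
    offDiag_card, card_product, card_product,
    card_cliqueSet (by omega), card_indepSet (by omega), card_joinSet h]
  simp only [nsmul_eq_mul]
  rw [Nat.cast_sub (Nat.le_mul_self _), Nat.cast_mul, Nat.cast_sub (by omega)]
  push_cast
  ring

end Mgraph

/-- Deleting from `M_k(n)` a single edge with both endpoints in the clique
`K_{n-k}` leaves a graph of spectral radius at least `n - k - 1`, provided
`k ≥ 2` and `2k + 1 ≤ n ≤ k³/2 + k + 1`. -/
theorem stmt_18 (k n : ℕ) (hk : 2 ≤ k) (hn1 : 2 * k + 1 ≤ n)
    (hn2 : (n : ℝ) ≤ (k : ℝ) ^ 3 / 2 + k + 1)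
    (u v : Fin n) (hu : k ≤ u.val) (hv : k ≤ v.val) (hadj : (Mgraph k n).Adj u v) :
    specRad ((Mgraph k n).deleteEdges {s(u, v)}) ≥ (n : ℝ) - k - 1 := by
  classical
  set w := Mgraph.testVector k n (2 / (k : ℝ) ^ 2)
  have hwu : w u = 1 := Mgraph.testVector_of_mem_cliqueSet (by simpa [Mgraph.cliqueSet] using hu)
  have hwv : w v = 1 := Mgraph.testVector_of_mem_cliqueSet (by simpa [Mgraph.cliqueSet] using hv)
  have hk0 : (0 : ℝ) < k := by exact_mod_cast (by omega : 0 < k)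
  have hkn : (k : ℝ) < n := by exact_mod_cast (by omega : k < n)
  have hnorm : w ⬝ᵥ w = 4 / (k : ℝ) ^ 3 + (n - k) := by
    rw [Mgraph.testVector_dotProduct_self (by omega)]
    field_simp
    norm_num
  have hquad : w ⬝ᵥ (((Mgraph k n).deleteEdges {s(u, v)}).adjMatrix ℝ *ᵥ w) =
      (n - k) * (n - k - 1) + 2 := by
    have hdel := sum_adj_deleteEdges_add hadj (fun p => w p.1 * w p.2)
    rw [Mgraph.sum_adj_testVector (by omega), hwu, hwv] at hdel
    rw [dotProduct_adjMatrix_mulVec]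
    field_simp at hdel
    linarith
  refine le_specRad_of_mul_le_dotProduct _ (by rw [hnorm]; positivity) ?_
  rw [hnorm, hquad]
  have hsmall : ((n : ℝ) - k - 1) * (4 / k ^ 3) ≤ 2 := by
    rw [mul_div_assoc', div_le_iff₀ (by positivity)]
    linarith
  nlinarith
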